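/- (Bounded finite model property) If the sequent A ⊢ B is not provable in IDFNL, then there is a Došen model with a finite set of states — of cardinality at most 2^{|Φ|}, where Φ is the closure of {A, B} — in which A ⊢ B is not valid. -/

import Mathlib

/-!
Canonical model over the finite closure `Φ` of `{A, B}`. Its states are the partitions
`(a⁺, a⁻)` of `Φ` that are independent (no finite conjunction from `a⁺` proves a finite
disjunction from `a⁻`); a state is determined by `a⁺ ⊆ Φ`, so there are at most `2^|Φ|` of
them. Lindenbaum's lemma, relativized to `Φ`, extends the independent pair `({A}, {B})` to a
state containing `A` but not `B`, and the truth lemma (`C` holds at `a` iff `C ∈ a⁺`, for `C ∈ Φ`)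
refutes `A ⊢ B` there. The witnesses needed for `•`, `∖` and `/` come from Lindenbaum's lemma
applied to pairs with a deductively closed side (a filter or an ideal); for `∖∖` and `//` the
finiteness of the model turns the satisfying states into a single formula to which the induction
rules apply.
-/

/-- Formulas of the language L₁. `ldiv A B` is A∖B, `rdiv B A` is B/A,
`ildiv A B` is A∖∖B (iterative left division), `irdiv B A` is B//A. -/
inductive Fm : Type where
  | var : ℕ → Fm
  | top : Fm
  | bot : Fm
  | and : Fm → Fm → Fm
  | or : Fm → Fm → Fm
  | prod : Fm → Fm → Fm
  | ldiv : Fm → Fm → Fm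
  | rdiv : Fm → Fm → Fm
  | ildiv : Fm → Fm → Fm
  | irdiv : Fm → Fm → Fm

/-- A Došen model on the set of states `S`: a ternary relation and a valuation. -/
structure DosenModel (S : Type*) where
  R : S → S → S → Prop
  V : ℕ → Set S

/-- `Rleft R x̄ s t` is the relation R⃖x̄ s t for a path x̄ (nonempty list). -/
def Rleft {S : Type*} (R : S → S → S → Prop) : List S → S → S → Prop
  | [], _, _ => False
  | [x], s, t => R x s t
  | x :: y :: xs, s, t => ∃ z, R x s z ∧ Rleft R (y :: xs) z t

/-- `Rright R s x̄ t` is the relation R s x̄⃗ t for a path x̄ (nonempty list). -/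
def Rright {S : Type*} (R : S → S → S → Prop) : S → List S → S → Prop
  | _, [], _ => False
  | s, [x], t => R s x t
  | s, x :: y :: xs, t => ∃ z, R s x z ∧ Rright R z (y :: xs) t

/-- Satisfaction: `sat M A s` means s ⊨ A in the model M. -/
def sat {S : Type*} (M : DosenModel S) : Fm → S → Prop
  | .var p, s => s ∈ M.V p
  | .top, _ => True
  | .bot, _ => False
  | .and A B, s => sat M A s ∧ sat M B s
  | .or A B, s => sat M A s ∨ sat M B s
  | .prod A B, s => ∃ t u, M.R t u s ∧ sat M A t ∧ sat M B u
  | .ldiv A B, s => ∀ t u, M.R t s u → sat M A t → sat M B u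
  | .rdiv B A, s => ∀ t u, M.R s t u → sat M A t → sat M B u
  | .ildiv A B, s =>
      ∀ (xs : List S) (t : S), xs ≠ [] → Rleft M.R xs s t → (∀ x ∈ xs, sat M A x) → sat M B t
  | .irdiv B A, s =>
      ∀ (xs : List S) (t : S), xs ≠ [] → Rright M.R s xs t → (∀ x ∈ xs, sat M A x) → sat M B t

/-- Validity of the sequent A ⊢ B in a model. -/
def valid {S : Type*} (M : DosenModel S) (A B : Fm) : Prop :=
  ∀ s, sat M A s → sat M B s

/-- `ldivN A B n` is A∖ⁿB (meaningful for n ≥ 1): A∖¹B = A∖B, A∖ⁿ⁺¹B = A∖(A∖ⁿB). -/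
def ldivN (A B : Fm) : ℕ → Fm
  | 0 => B
  | n + 1 => .ldiv A (ldivN A B n)

/-- `rdivN B A n` is B/ⁿA (meaningful for n ≥ 1): B/¹A = B/A, B/ⁿ⁺¹A = (B/ⁿA)/A. -/
def rdivN (B A : Fm) : ℕ → Fm
  | 0 => B
  | n + 1 => .rdiv (rdivN B A n) A

/-- `RIter R n` is the relation Rⁿ⁺¹ of the paper: R¹ = R,
R^{n+1} s t u iff ∃ x y, R s y u ∧ Rⁿ x t y. -/
def RIter {S : Type*} (R : S → S → S → Prop) : ℕ → S → S → S → Prop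
  | 0, s, t, u => R s t u
  | n + 1, s, t, u => ∃ x y, R s y u ∧ RIter R n x t y

/-- The left transitive closure R⁺ˡ = ⋃_{n ≥ 1} Rⁿ. -/
def RplusL {S : Type*} (R : S → S → S → Prop) (s t u : S) : Prop :=
  ∃ n, RIter R n s t u

/-- Provability in the axiom system IDFNL. `Prov A B` means A ⟶ B. -/
inductive Prov : Fm → Fm → Prop
  | id (A : Fm) : Prov A A
  | top (A : Fm) : Prov A .top
  | bot (A : Fm) : Prov .bot A
  | andE1 (A B : Fm) : Prov (A.and B) A
  | andE2 (A B : Fm) : Prov (A.and B) B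
  | orI1 (A B : Fm) : Prov A (A.or B)
  | orI2 (A B : Fm) : Prov B (A.or B)
  | distrib (A B C : Fm) : Prov (A.and (B.or C)) ((A.and B).or (A.and C))
  | ildivAnd (A B C : Fm) : Prov ((A.ildiv B).and (A.ildiv C)) (A.ildiv (B.and C))
  | ildivUnfold (A B : Fm) : Prov (A.ildiv B) ((A.ldiv B).and (A.ldiv (A.ildiv B)))
  | ildivFold (A B : Fm) : Prov ((A.ldiv B).and (A.ldiv (A.ildiv B))) (A.ildiv B)
  | irdivAnd (A B C : Fm) : Prov ((B.irdiv A).and (C.irdiv A)) ((B.and C).irdiv A)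
  | irdivUnfold (A B : Fm) : Prov (B.irdiv A) ((B.rdiv A).and ((B.irdiv A).rdiv A))
  | irdivFold (A B : Fm) : Prov (((B.irdiv A).rdiv A).and (B.rdiv A)) (B.irdiv A)
  | resL1 {A B C : Fm} : Prov (A.prod B) C → Prov B (A.ldiv C)
  | resL2 {A B C : Fm} : Prov B (A.ldiv C) → Prov (A.prod B) C
  | resR1 {A B C : Fm} : Prov (A.prod B) C → Prov A (C.rdiv B)
  | resR2 {A B C : Fm} : Prov A (C.rdiv B) → Prov (A.prod B) C
  | andI {A B C : Fm} : Prov A B → Prov A C → Prov A (B.and C)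
  | orE {A B C : Fm} : Prov A C → Prov B C → Prov (A.or B) C
  | cut {A B C : Fm} : Prov A B → Prov B C → Prov A C
  | ildivMono {A B C D : Fm} : Prov A B → Prov C D → Prov (B.ildiv C) (A.ildiv D)
  | irdivMono {A B C D : Fm} : Prov A B → Prov C D → Prov (C.irdiv B) (D.irdiv A)
  | ildivInd {A B : Fm} : Prov A (B.ldiv A) → Prov A (B.ildiv A)
  | irdivInd {A B : Fm} : Prov A (A.rdiv B) → Prov A (A.irdiv B)

/-- Conjunction of a finite list of formulas (⋀∅ = ⊤). -/
def bigAnd : List Fm → Fm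
  | [] => .top
  | A :: As => A.and (bigAnd As)

/-- Disjunction of a finite list of formulas (⋁∅ = ⊥). -/
def bigOr : List Fm → Fm
  | [] => .bot
  | A :: As => A.or (bigOr As)

/-- An independent IDFNL-pair: no finite Γ′ ⊆ Γ, Δ′ ⊆ Δ with ⋀Γ′ ⟶ ⋁Δ′. -/
def IndepPair (Γ Δ : Set Fm) : Prop :=
  ¬ ∃ (γ δ : List Fm), (∀ A ∈ γ, A ∈ Γ) ∧ (∀ A ∈ δ, A ∈ Δ) ∧ Prov (bigAnd γ) (bigOr δ)

/-- A prime IDFNL-theory. -/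
def PrimeTheory (T : Set Fm) : Prop :=
  (∀ A B, A ∈ T → B ∈ T → A.and B ∈ T) ∧
  (∀ A B, A ∈ T → Prov A B → B ∈ T) ∧
  (∀ A B, A.or B ∈ T → A ∈ T ∨ B ∈ T)

/-- Membership in the closure of a set of formulas Φ′: the smallest set
containing Φ′, ⊤, ⊥, closed under subformulas, and such that
A∖∖B ∈ Φ implies A∖B ∈ Φ and B//A ∈ Φ implies B/A ∈ Φ. -/
inductive Closure (Φ : Set Fm) : Fm → Prop
  | base {A : Fm} : A ∈ Φ → Closure Φ A
  | top : Closure Φ .top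
  | bot : Closure Φ .bot
  | andL {A B : Fm} : Closure Φ (A.and B) → Closure Φ A
  | andR {A B : Fm} : Closure Φ (A.and B) → Closure Φ B
  | orL {A B : Fm} : Closure Φ (A.or B) → Closure Φ A
  | orR {A B : Fm} : Closure Φ (A.or B) → Closure Φ B
  | prodL {A B : Fm} : Closure Φ (A.prod B) → Closure Φ A
  | prodR {A B : Fm} : Closure Φ (A.prod B) → Closure Φ B
  | ldivL {A B : Fm} : Closure Φ (A.ldiv B) → Closure Φ A
  | ldivR {A B : Fm} : Closure Φ (A.ldiv B) → Closure Φ B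
  | rdivL {A B : Fm} : Closure Φ (A.rdiv B) → Closure Φ A
  | rdivR {A B : Fm} : Closure Φ (A.rdiv B) → Closure Φ B
  | ildivL {A B : Fm} : Closure Φ (A.ildiv B) → Closure Φ A
  | ildivR {A B : Fm} : Closure Φ (A.ildiv B) → Closure Φ B
  | irdivL {A B : Fm} : Closure Φ (A.irdiv B) → Closure Φ A
  | irdivR {A B : Fm} : Closure Φ (A.irdiv B) → Closure Φ B
  | ildivDiv {A B : Fm} : Closure Φ (A.ildiv B) → Closure Φ (A.ldiv B)
  | irdivDiv {A B : Fm} : Closure Φ (B.irdiv A) → Closure Φ (B.rdiv A)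

/-- A set of formulas is closed iff it equals its own closure. -/
def ClosedSet (Φ : Set Fm) : Prop := {A | Closure Φ A} = Φ

/-- `entails Γ A`: ⋀Γ′ ⟶ A for some finite Γ′ ⊆ Γ. -/
def entails (Γ : Set Fm) (A : Fm) : Prop :=
  ∃ γ : List Fm, (∀ X ∈ γ, X ∈ Γ) ∧ Prov (bigAnd γ) A

/-- States of the canonical model over a (finite closed) set Φ:
independent IDFNL-pairs (a_in, a_out) with a_in ∪ a_out = Φ. -/
def CanState (Φ : Set Fm) : Type :=
  {a : Set Fm × Set Fm // IndepPair a.1 a.2 ∧ a.1 ∪ a.2 = Φ}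

/-- The canonical accessibility relation. -/
def canR (Φ : Set Fm) (a b c : CanState Φ) : Prop :=
  ∀ A B : Fm, A ∈ Φ → B ∈ Φ → entails a.1.1 A → entails b.1.1 (A.ldiv B) → entails c.1.1 B

/-- The canonical model M_Φ. -/
def canModel (Φ : Set Fm) : DosenModel (CanState Φ) :=
  ⟨canR Φ, fun p => {a | Fm.var p ∈ Φ ∧ Fm.var p ∈ a.1.1}⟩

namespace Prov

theorem prod_mono_left {A A' B : Fm} (h : Prov A A') : Prov (A.prod B) (A'.prod B) :=
  resR2 (cut h (resR1 (id _)))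

theorem prod_mono_right {A B B' : Fm} (h : Prov B B') : Prov (A.prod B) (A.prod B') :=
  resL2 (cut h (resL1 (id _)))

theorem prod_ldiv (A B : Fm) : Prov (A.prod (A.ldiv B)) B := resL2 (id _)

theorem rdiv_prod (A B : Fm) : Prov ((B.rdiv A).prod A) B := resR2 (id _)

theorem ldiv_anti_left {A A' C : Fm} (h : Prov A' A) : Prov (A.ldiv C) (A'.ldiv C) :=
  resL1 (cut (prod_mono_left h) (prod_ldiv _ _))

theorem ldiv_mono_right {A C D : Fm} (h : Prov C D) : Prov (A.ldiv C) (A.ldiv D) :=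
  resL1 (cut (prod_ldiv _ _) h)

theorem rdiv_anti_right {A A' C : Fm} (h : Prov A' A) : Prov (C.rdiv A) (C.rdiv A') :=
  resR1 (cut (prod_mono_right h) (rdiv_prod _ _))

theorem bot_prod (B C : Fm) : Prov (Fm.bot.prod B) C := resR2 (bot _)

theorem prod_bot (A C : Fm) : Prov (A.prod Fm.bot) C := resL2 (bot _)

theorem or_prod (A B C : Fm) : Prov ((A.or B).prod C) ((A.prod C).or (B.prod C)) :=
  resR2 (orE (resR1 (orI1 _ _)) (resR1 (orI2 _ _)))

theorem prod_or (A B C : Fm) : Prov (A.prod (B.or C)) ((A.prod B).or (A.prod C)) :=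
  resL2 (orE (resL1 (orI1 _ _)) (resL1 (orI2 _ _)))

theorem and_le_left {A B C : Fm} (h : Prov A C) : Prov (A.and B) C := cut (andE1 _ _) h

theorem and_le_right {A B C : Fm} (h : Prov B C) : Prov (A.and B) C := cut (andE2 _ _) h

theorem le_or_left {A B C : Fm} (h : Prov A B) : Prov A (B.or C) := cut h (orI1 _ _)

theorem le_or_right {A B C : Fm} (h : Prov A C) : Prov A (B.or C) := cut h (orI2 _ _)

theorem ldiv_or (A B C : Fm) : Prov ((A.ldiv C).and (B.ldiv C)) ((A.or B).ldiv C) :=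
  resL1 (cut (or_prod _ _ _) (orE (cut (prod_mono_right (andE1 _ _)) (prod_ldiv _ _))
    (cut (prod_mono_right (andE2 _ _)) (prod_ldiv _ _))))

theorem rdiv_or (A B C : Fm) : Prov ((C.rdiv A).and (C.rdiv B)) (C.rdiv (A.or B)) :=
  resR1 (cut (prod_or _ _ _) (orE (cut (prod_mono_left (andE1 _ _)) (rdiv_prod _ _))
    (cut (prod_mono_left (andE2 _ _)) (rdiv_prod _ _))))

theorem ldiv_and_ldiv (X Y U V : Fm) :
    Prov ((X.ldiv Y).and (U.ldiv V)) ((X.and U).ldiv (Y.and V)) :=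
  resL1 (andI
    (cut (cut (prod_mono_left (andE1 _ _)) (prod_mono_right (andE1 _ _))) (prod_ldiv _ _))
    (cut (cut (prod_mono_left (andE2 _ _)) (prod_mono_right (andE2 _ _))) (prod_ldiv _ _)))

/-- Since `A • X ⊢ X`, the induction rule gives `A • X ⊢ A∖∖(A • X) ⊢ A∖∖B`; then fold. -/
theorem ildiv_coind {X A B : Fm} (hB : Prov X (A.ldiv B)) (hX : Prov X (A.ldiv X)) :
    Prov X (A.ildiv B) := by
  have hAX : Prov (A.prod X) X := resL2 hX
  have hstep : Prov (A.prod X) (A.ildiv B) :=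
    cut (ildivInd (resL1 (prod_mono_right hAX))) (ildivMono (id A) (resL2 hB))
  exact cut (andI hB (resL1 hstep)) (ildivFold A B)

theorem irdiv_coind {X A B : Fm} (hB : Prov X (B.rdiv A)) (hX : Prov X (X.rdiv A)) :
    Prov X (B.irdiv A) := by
  have hXA : Prov (X.prod A) X := resR2 hX
  have hstep : Prov (X.prod A) (B.irdiv A) :=
    cut (irdivInd (resR1 (prod_mono_left hXA))) (irdivMono (id A) (resR2 hB))
  exact cut (andI (resR1 hstep) hB) (irdivFold A B)

theorem bigAnd_left_of_mem {γ : List Fm} {C : Fm} (h : C ∈ γ) : Prov (bigAnd γ) C := by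
  induction γ with
  | nil => cases h
  | cons D γ ih =>
    rcases List.mem_cons.mp h with rfl | h
    · exact andE1 _ _
    · exact and_le_right (ih h)

theorem bigAnd_right {γ : List Fm} {Z : Fm} (h : ∀ X ∈ γ, Prov Z X) : Prov Z (bigAnd γ) := by
  induction γ with
  | nil => exact top _
  | cons D γ ih =>
    exact andI (h D List.mem_cons_self) (ih fun X hX => h X (List.mem_cons_of_mem _ hX))

theorem bigOr_right_of_mem {δ : List Fm} {C : Fm} (h : C ∈ δ) : Prov C (bigOr δ) := by
  induction δ with
  | nil => cases h
  | cons D δ ih =>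
    rcases List.mem_cons.mp h with rfl | h
    · exact orI1 _ _
    · exact le_or_right (ih h)

theorem bigOr_left {δ : List Fm} {Z : Fm} (h : ∀ X ∈ δ, Prov X Z) : Prov (bigOr δ) Z := by
  induction δ with
  | nil => exact bot _
  | cons D δ ih =>
    exact orE (h D List.mem_cons_self) (ih fun X hX => h X (List.mem_cons_of_mem _ hX))

theorem bigAnd_of_subset {γ γ' : List Fm} (h : ∀ X ∈ γ, X ∈ γ') :
    Prov (bigAnd γ') (bigAnd γ) :=
  bigAnd_right fun _ hX => bigAnd_left_of_mem (h _ hX)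

theorem bigOr_of_subset {δ δ' : List Fm} (h : ∀ X ∈ δ, X ∈ δ') :
    Prov (bigOr δ) (bigOr δ') :=
  bigOr_left fun _ hX => bigOr_right_of_mem (h _ hX)

end Prov

def coentails (Δ : Set Fm) (A : Fm) : Prop :=
  ∃ δ : List Fm, (∀ X ∈ δ, X ∈ Δ) ∧ Prov A (bigOr δ)

structure IsFilter (Γ : Set Fm) : Prop where
  top_mem : Fm.top ∈ Γ
  and_mem {F G : Fm} : F ∈ Γ → G ∈ Γ → F.and G ∈ Γ
  mem_of_prov {F G : Fm} : Prov F G → F ∈ Γ → G ∈ Γ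

structure IsIdeal (Δ : Set Fm) : Prop where
  bot_mem : Fm.bot ∈ Δ
  or_mem {F G : Fm} : F ∈ Δ → G ∈ Δ → F.or G ∈ Δ
  mem_of_prov {F G : Fm} : Prov F G → G ∈ Δ → F ∈ Δ

section Entailment

variable {Γ Δ : Set Fm} {A F G : Fm}

theorem entails_of_mem (h : A ∈ Γ) : entails Γ A :=
  ⟨[A], by simpa using h, Prov.andE1 _ _⟩

theorem entails_of_prov_top (h : Prov .top A) : entails Γ A := ⟨[], by simp, h⟩

theorem entails.cut (h : entails Γ F) (hp : Prov F G) : entails Γ G :=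
  let ⟨γ, hγ, hF⟩ := h
  ⟨γ, hγ, hF.cut hp⟩

theorem entails.and (hF : entails Γ F) (hG : entails Γ G) : entails Γ (F.and G) := by
  obtain ⟨γ₁, hγ₁, hp₁⟩ := hF
  obtain ⟨γ₂, hγ₂, hp₂⟩ := hG
  refine ⟨γ₁ ++ γ₂, fun X hX => (List.mem_append.1 hX).elim (hγ₁ X) (hγ₂ X), Prov.andI ?_ ?_⟩
  · exact (Prov.bigAnd_of_subset fun _ => List.mem_append_left _).cut hp₁
  · exact (Prov.bigAnd_of_subset fun _ => List.mem_append_right _).cut hp₂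

theorem coentails_of_mem (h : A ∈ Δ) : coentails Δ A :=
  ⟨[A], by simpa using h, Prov.orI1 _ _⟩

theorem coentails_bot : coentails Δ .bot := ⟨[], by simp, Prov.id _⟩

theorem coentails.of_prov (h : coentails Δ G) (hp : Prov F G) : coentails Δ F :=
  let ⟨δ, hδ, hG⟩ := h
  ⟨δ, hδ, hp.cut hG⟩

theorem coentails.or (hF : coentails Δ F) (hG : coentails Δ G) : coentails Δ (F.or G) := by
  obtain ⟨δ₁, hδ₁, hp₁⟩ := hF
  obtain ⟨δ₂, hδ₂, hp₂⟩ := hG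
  refine ⟨δ₁ ++ δ₂, fun X hX => (List.mem_append.1 hX).elim (hδ₁ X) (hδ₂ X), Prov.orE ?_ ?_⟩
  · exact hp₁.cut (Prov.bigOr_of_subset fun _ => List.mem_append_left _)
  · exact hp₂.cut (Prov.bigOr_of_subset fun _ => List.mem_append_right _)

theorem IsFilter.bigAnd_mem {Γ' : Set Fm} (hΓ' : IsFilter Γ') {γ : List Fm}
    (hγ : ∀ X ∈ γ, X ∈ Γ') : bigAnd γ ∈ Γ' := by
  induction γ with
  | nil => exact hΓ'.top_mem
  | cons X γ ih =>
    exact hΓ'.and_mem (hγ X List.mem_cons_self) (ih fun Y hY => hγ Y (List.mem_cons_of_mem _ hY))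

theorem IsFilter.mem_of_entails {Γ' : Set Fm} (hΓ' : IsFilter Γ') (hsub : Γ ⊆ Γ')
    (h : entails Γ A) : A ∈ Γ' :=
  let ⟨_, hγ, hp⟩ := h
  hΓ'.mem_of_prov hp (hΓ'.bigAnd_mem fun X hX => hsub (hγ X hX))

theorem IsIdeal.bigOr_mem {Δ' : Set Fm} (hΔ' : IsIdeal Δ') {δ : List Fm}
    (hδ : ∀ X ∈ δ, X ∈ Δ') : bigOr δ ∈ Δ' := by
  induction δ with
  | nil => exact hΔ'.bot_mem
  | cons X δ ih =>
    exact hΔ'.or_mem (hδ X List.mem_cons_self) (ih fun Y hY => hδ Y (List.mem_cons_of_mem _ hY))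

theorem IsIdeal.mem_of_coentails {Δ' : Set Fm} (hΔ' : IsIdeal Δ') (hsub : Δ ⊆ Δ')
    (h : coentails Δ A) : A ∈ Δ' :=
  let ⟨_, hδ, hp⟩ := h
  hΔ'.mem_of_prov hp (hΔ'.bigOr_mem fun X hX => hsub (hδ X hX))

theorem isFilter_prov (A : Fm) : IsFilter {F | Prov A F} :=
  ⟨Prov.top A, Prov.andI, fun hp h => h.cut hp⟩

theorem isIdeal_prov (B : Fm) : IsIdeal {F | Prov F B} :=
  ⟨Prov.bot B, Prov.orE, fun hp h => hp.cut h⟩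

theorem entails_singleton_iff : entails {A} F ↔ Prov A F :=
  ⟨(isFilter_prov A).mem_of_entails (by simpa using Prov.id A),
    fun h => (entails_of_mem (Set.mem_singleton A)).cut h⟩

theorem coentails_singleton_iff : coentails {A} F ↔ Prov F A :=
  ⟨(isIdeal_prov A).mem_of_coentails (by simpa using Prov.id A),
    fun h => (coentails_of_mem (Set.mem_singleton A)).of_prov h⟩

theorem indepPair_iff : IndepPair Γ Δ ↔ ∀ F, entails Γ F → ¬ coentails Δ F := by
  constructor
  · rintro h F ⟨γ, hγ, hγF⟩ ⟨δ, hδ, hFδ⟩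
    exact h ⟨γ, δ, hγ, hδ, hγF.cut hFδ⟩
  · rintro h ⟨γ, δ, hγ, hδ, hp⟩
    exact h _ ⟨γ, hγ, Prov.id _⟩ ⟨δ, hδ, hp⟩

theorem IndepPair.not_entails_of_mem (h : IndepPair Γ Δ) (hA : A ∈ Δ) : ¬ entails Γ A :=
  fun hΓ => indepPair_iff.1 h A hΓ (coentails_of_mem hA)

theorem indepPair_singleton_left_iff : IndepPair {A} Δ ↔ ¬ coentails Δ A := by
  simp only [indepPair_iff, entails_singleton_iff]
  exact ⟨fun h => h A (Prov.id A), fun h F hAF hF => h (hF.of_prov hAF)⟩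

theorem indepPair_singleton_right_iff : IndepPair Γ {A} ↔ ¬ entails Γ A := by
  simp only [indepPair_iff, coentails_singleton_iff]
  exact ⟨fun h hA => h A hA (Prov.id A), fun h F hF hFA => h (hF.cut hFA)⟩

theorem IndepPair.mono {Γ' Δ' : Set Fm} (h : IndepPair Γ Δ) (hΓ : Γ' ⊆ Γ) (hΔ : Δ' ⊆ Δ) :
    IndepPair Γ' Δ' := fun ⟨γ, δ, hγ, hδ, hp⟩ =>
  h ⟨γ, δ, fun X hX => hΓ (hγ X hX), fun X hX => hΔ (hδ X hX), hp⟩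

/-- If `Γ` entails `G` and `F₂` with `G ∧ C ⊢ F₁` and `F₂ ⊢ C ∨ D`, where `Δ` coentails `F₁`
and `D`, then distributivity gives `G ∧ F₂ ⊢ F₁ ∨ D`. -/
theorem IndepPair.insert_or (h : IndepPair Γ Δ) (C : Fm) :
    IndepPair (insert C Γ) Δ ∨ IndepPair Γ (insert C Δ) := by
  by_contra! hcon
  obtain ⟨h₁, h₂⟩ := hcon
  simp only [indepPair_iff, not_forall, not_not] at h₁ h₂
  obtain ⟨F₁, hΓF₁, hΔF₁⟩ := h₁
  obtain ⟨F₂, hΓF₂, hΔF₂⟩ := h₂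
  have hΓ' : IsFilter {F | ∃ G, entails Γ G ∧ Prov (G.and C) F} := by
    refine ⟨⟨.top, entails_of_prov_top (Prov.id _), Prov.top _⟩, ?_, ?_⟩
    · rintro F F' ⟨G, hG, hp⟩ ⟨G', hG', hp'⟩
      refine ⟨G.and G', hG.and hG', Prov.andI ?_ ?_⟩
      · exact (Prov.andI (Prov.and_le_left (Prov.andE1 _ _)) (Prov.andE2 _ _)).cut hp
      · exact (Prov.andI (Prov.and_le_left (Prov.andE2 _ _)) (Prov.andE2 _ _)).cut hp'
    · rintro F F' hFF' ⟨G, hG, hp⟩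
      exact ⟨G, hG, hp.cut hFF'⟩
  have hΔ' : IsIdeal {F | ∃ D, coentails Δ D ∧ Prov F (C.or D)} := by
    refine ⟨⟨.bot, coentails_bot, Prov.bot _⟩, ?_, ?_⟩
    · rintro F F' ⟨D, hD, hp⟩ ⟨D', hD', hp'⟩
      refine ⟨D.or D', hD.or hD', Prov.orE ?_ ?_⟩
      · exact hp.cut (Prov.orE (Prov.orI1 _ _) (Prov.le_or_right (Prov.orI1 _ _)))
      · exact hp'.cut (Prov.orE (Prov.orI1 _ _) (Prov.le_or_right (Prov.orI2 _ _)))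
    · rintro F F' hFF' ⟨D, hD, hp⟩
      exact ⟨D, hD, hFF'.cut hp⟩
  obtain ⟨G, hG, hGF₁⟩ := hΓ'.mem_of_entails
    (Set.insert_subset ⟨.top, entails_of_prov_top (Prov.id _), Prov.andE2 _ _⟩
      fun X hX => ⟨X, entails_of_mem hX, Prov.andE1 _ _⟩) hΓF₁
  obtain ⟨D, hD, hF₂D⟩ := hΔ'.mem_of_coentails
    (Set.insert_subset ⟨.bot, coentails_bot, Prov.orI1 _ _⟩
      fun X hX => ⟨X, coentails_of_mem hX, Prov.orI2 _ _⟩) hΔF₂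
  refine indepPair_iff.1 h _ (hG.and hΓF₂) ((hΔF₁.or hD).of_prov ?_)
  refine (Prov.andI (Prov.andE1 _ _) (Prov.and_le_right hF₂D)).cut ((Prov.distrib _ _ _).cut ?_)
  exact Prov.orE (Prov.le_or_left hGF₁) (Prov.le_or_right (Prov.andE2 _ _))

end Entailment

theorem IndepPair.exists_cover {Γ Δ s : Set Fm} (h : IndepPair Γ Δ) (hs : s.Finite) :
    ∃ Γ' Δ', Γ ⊆ Γ' ∧ Δ ⊆ Δ' ∧ IndepPair Γ' Δ' ∧ s ⊆ Γ' ∪ Δ' := by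
  induction s, hs using Set.Finite.induction_on with
  | empty => exact ⟨Γ, Δ, subset_rfl, subset_rfl, h, Set.empty_subset _⟩
  | @insert C s _ _ ih =>
    obtain ⟨Γ', Δ', hΓ, hΔ, hind, hcov⟩ := ih
    rcases hind.insert_or C with h' | h'
    · refine ⟨insert C Γ', Δ', hΓ.trans (Set.subset_insert _ _), hΔ, h', ?_⟩
      exact Set.insert_subset (Or.inl (Set.mem_insert _ _))
        (hcov.trans (Set.union_subset_union_left _ (Set.subset_insert _ _)))
    · refine ⟨Γ', insert C Δ', hΓ, hΔ.trans (Set.subset_insert _ _), h', ?_⟩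
      exact Set.insert_subset (Or.inr (Set.mem_insert _ _))
        (hcov.trans (Set.union_subset_union_right _ (Set.subset_insert _ _)))

namespace CanState

variable {Φ : Set Fm} (a : CanState Φ) {C : Fm}

theorem fst_subset : a.1.1 ⊆ Φ := a.2.2.subst (motive := (a.1.1 ⊆ ·)) Set.subset_union_left

theorem snd_subset : a.1.2 ⊆ Φ := a.2.2.subst (motive := (a.1.2 ⊆ ·)) Set.subset_union_right

theorem mem_fst_or_mem_snd (hC : C ∈ Φ) : C ∈ a.1.1 ∨ C ∈ a.1.2 := by
  rw [← a.2.2] at hC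
  exact hC

theorem mem_iff_entails (hC : C ∈ Φ) : C ∈ a.1.1 ↔ entails a.1.1 C := by
  refine ⟨entails_of_mem, fun h => (a.mem_fst_or_mem_snd hC).resolve_right fun hC' => ?_⟩
  exact a.2.1.not_entails_of_mem hC' h

theorem notMem_snd_of_mem_fst (h : C ∈ a.1.1) : C ∉ a.1.2 :=
  fun h' => a.2.1.not_entails_of_mem h' (entails_of_mem h)

theorem coentails_of_not_entails (hC : C ∈ Φ) (h : ¬ entails a.1.1 C) : coentails a.1.2 C :=
  coentails_of_mem ((a.mem_fst_or_mem_snd hC).resolve_left fun h' => h (entails_of_mem h'))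

theorem mem_or_of_or_mem {X Y : Fm} (hX : X ∈ Φ) (hY : Y ∈ Φ) (h : X.or Y ∈ a.1.1) :
    X ∈ a.1.1 ∨ Y ∈ a.1.1 := by
  by_contra! hn
  have hXY : coentails a.1.2 (X.or Y) :=
    (coentails_of_mem ((a.mem_fst_or_mem_snd hX).resolve_left hn.1)).or
      (coentails_of_mem ((a.mem_fst_or_mem_snd hY).resolve_left hn.2))
  exact indepPair_iff.1 a.2.1 _ (entails_of_mem h) hXY

theorem eq_of_fst_eq {a b : CanState Φ} (h : a.1.1 = b.1.1) : a = b := by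
  have hsnd : ∀ c : CanState Φ, c.1.2 = Φ \ c.1.1 := fun c => by
    ext C
    exact ⟨fun h => ⟨c.snd_subset h, fun h' => c.notMem_snd_of_mem_fst h' h⟩,
      fun h => (c.mem_fst_or_mem_snd h.1).resolve_left h.2⟩
  exact Subtype.ext (Prod.ext h (by rw [hsnd, hsnd b, h]))

theorem injective_memPred : Function.Injective fun (a : CanState Φ) (x : Φ) => x.1 ∈ a.1.1 := by
  intro a b hab
  refine eq_of_fst_eq (Set.ext fun C => ⟨fun h => ?_, fun h => ?_⟩)
  · exact (congrFun hab ⟨C, a.fst_subset h⟩).mp h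
  · exact (congrFun hab ⟨C, b.fst_subset h⟩).mpr h

theorem finite (hΦ : Φ.Finite) : Finite (CanState Φ) := by
  have := hΦ.to_subtype
  exact Finite.of_injective _ injective_memPred

theorem card_le (hΦ : Φ.Finite) :
    Nat.card (CanState Φ) ≤ 2 ^ Nat.card Φ := by
  have := hΦ.to_subtype
  calc Nat.card (CanState Φ) ≤ Nat.card (Φ → Prop) :=
        Nat.card_le_card_of_injective _ injective_memPred
    _ = 2 ^ Nat.card Φ := by
      rw [Nat.card_fun, Nat.card_eq_fintype_card (α := Prop), Fintype.card_prop]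

end CanState

theorem canR.mem {Φ : Set Fm} {X Y : Fm} {a b c : CanState Φ} (hR : canR Φ a b c) (hX : X ∈ Φ)
    (hY : Y ∈ Φ) (ha : entails a.1.1 X) (hb : entails b.1.1 (X.ldiv Y)) : Y ∈ c.1.1 :=
  (c.mem_iff_entails hY).2 (hR X Y hX hY ha hb)

/-- Lindenbaum's lemma relativized to a finite `Φ`. -/
theorem exists_canState {Φ Γ Δ : Set Fm} (hΦ : Φ.Finite) (h : IndepPair Γ Δ) :
    ∃ a : CanState Φ, Γ ∩ Φ ⊆ a.1.1 ∧ IndepPair a.1.1 Δ := by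
  obtain ⟨Γ', Δ', hΓ, hΔ, hind, hcov⟩ := h.exists_cover hΦ
  refine ⟨⟨(Γ' ∩ Φ, Δ' ∩ Φ), hind.mono Set.inter_subset_left Set.inter_subset_left, ?_⟩,
      Set.inter_subset_inter_left _ hΓ, hind.mono Set.inter_subset_left hΔ⟩
  rw [← Set.union_inter_distrib_right, Set.inter_eq_right.2 hcov]

section Witness

variable {Φ : Set Fm}

theorem exists_canState_of_isIdeal {Δ : Set Fm} (hΦ : Φ.Finite) (hΔ : IsIdeal Δ) {X : Fm}
    (hX : X ∈ Φ) (hXΔ : X ∉ Δ) :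
    ∃ t : CanState Φ, X ∈ t.1.1 ∧ ∀ F, entails t.1.1 F → F ∉ Δ := by
  have hind : IndepPair {X} Δ :=
    indepPair_singleton_left_iff.2 fun h => hXΔ (hΔ.mem_of_coentails subset_rfl h)
  obtain ⟨t, hXt, ht⟩ := exists_canState hΦ hind
  exact ⟨t, hXt ⟨rfl, hX⟩, fun F hF hFΔ => ht.not_entails_of_mem hFΔ hF⟩

theorem exists_canR_of_not_entails (hΦ : Φ.Finite) (b c : CanState Φ) {T : Fm}
    (h : ∀ X, entails b.1.1 X → ¬ entails c.1.1 (X.ldiv T)) :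
    ∃ u : CanState Φ, canR Φ b c u ∧ ¬ entails u.1.1 T := by
  have hΓ : IsFilter {Y | ∃ X, entails b.1.1 X ∧ entails c.1.1 (X.ldiv Y)} := by
    refine ⟨⟨.top, entails_of_prov_top (Prov.id _),
      entails_of_prov_top (Prov.resL1 (Prov.top _))⟩, ?_, ?_⟩
    · rintro F G ⟨X, hX, hXF⟩ ⟨X', hX', hXG⟩
      exact ⟨X.and X', hX.and hX', (hXF.and hXG).cut (Prov.ldiv_and_ldiv _ _ _ _)⟩
    · rintro F G hp ⟨X, hX, hXF⟩
      exact ⟨X, hX, hXF.cut (Prov.ldiv_mono_right hp)⟩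
  have hind : IndepPair {Y | ∃ X, entails b.1.1 X ∧ entails c.1.1 (X.ldiv Y)} {T} :=
    indepPair_singleton_right_iff.2 fun hT =>
      let ⟨X, hX, hXT⟩ := hΓ.mem_of_entails subset_rfl hT
      h X hX hXT
  obtain ⟨u, hΓu, hu⟩ := exists_canState hΦ hind
  exact ⟨u, fun X Y _ hY hX hXY => entails_of_mem (hΓu ⟨⟨X, hX, hXY⟩, hY⟩),
    indepPair_singleton_right_iff.1 hu⟩

theorem exists_ldiv_witness (hΦ : Φ.Finite) (a : CanState Φ) {X T : Fm} (hX : X ∈ Φ)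
    (h : ¬ entails a.1.1 (X.ldiv T)) :
    ∃ t u : CanState Φ, canR Φ t a u ∧ X ∈ t.1.1 ∧ ¬ entails u.1.1 T := by
  have hΔ : IsIdeal {F | entails a.1.1 (F.ldiv T)} :=
    ⟨entails_of_prov_top (Prov.resL1 (Prov.bot_prod _ _)),
      fun hF hG => (hF.and hG).cut (Prov.ldiv_or _ _ _),
      fun hp hG => hG.cut (Prov.ldiv_anti_left hp)⟩
  obtain ⟨t, hXt, ht⟩ := exists_canState_of_isIdeal hΦ hΔ hX h
  obtain ⟨u, hR, hu⟩ := exists_canR_of_not_entails hΦ t a ht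
  exact ⟨t, u, hR, hXt, hu⟩

theorem exists_rdiv_witness (hΦ : Φ.Finite) (a : CanState Φ) {X T : Fm} (hX : X ∈ Φ)
    (h : ¬ entails a.1.1 (T.rdiv X)) :
    ∃ t u : CanState Φ, canR Φ a t u ∧ X ∈ t.1.1 ∧ ¬ entails u.1.1 T := by
  have hΔ : IsIdeal {F | entails a.1.1 (T.rdiv F)} :=
    ⟨entails_of_prov_top (Prov.resR1 (Prov.prod_bot _ _)),
      fun hF hG => (hF.and hG).cut (Prov.rdiv_or _ _ _),
      fun hp hG => hG.cut (Prov.rdiv_anti_right hp)⟩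
  obtain ⟨t, hXt, ht⟩ := exists_canState_of_isIdeal hΦ hΔ hX h
  obtain ⟨u, hR, hu⟩ := exists_canR_of_not_entails hΦ a t fun Y hY hYT =>
    ht _ hYT (hY.cut (Prov.resR1 (Prov.prod_ldiv _ _)))
  exact ⟨t, u, hR, hXt, hu⟩

theorem exists_prod_witness (hΦ : Φ.Finite) (c : CanState Φ) {X Y : Fm} (hX : X ∈ Φ)
    (hY : Y ∈ Φ) (h : X.prod Y ∈ c.1.1) :
    ∃ a b : CanState Φ, canR Φ a b c ∧ X ∈ a.1.1 ∧ Y ∈ b.1.1 := by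
  have hΔa : IsIdeal {F | coentails c.1.2 (F.prod Y)} :=
    ⟨coentails_bot.of_prov (Prov.bot_prod _ _),
      fun hF hG => (hF.or hG).of_prov (Prov.or_prod _ _ _),
      fun hp hG => hG.of_prov (Prov.prod_mono_left hp)⟩
  obtain ⟨a, hXa, ha⟩ := exists_canState_of_isIdeal hΦ hΔa hX
    (indepPair_iff.1 c.2.1 _ (entails_of_mem h))
  have hΔb : IsIdeal {G | ∃ F, entails a.1.1 F ∧ coentails c.1.2 (F.prod G)} := by
    refine ⟨⟨.top, entails_of_prov_top (Prov.id _),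
      coentails_bot.of_prov (Prov.prod_bot _ _)⟩, ?_, ?_⟩
    · rintro G G' ⟨F, hF, hFG⟩ ⟨F', hF', hFG'⟩
      refine ⟨F.and F', hF.and hF', (hFG.or hFG').of_prov ((Prov.prod_or _ _ _).cut ?_)⟩
      exact Prov.orE (Prov.le_or_left (Prov.prod_mono_left (Prov.andE1 _ _)))
        (Prov.le_or_right (Prov.prod_mono_left (Prov.andE2 _ _)))
    · rintro G G' hp ⟨F, hF, hFG⟩
      exact ⟨F, hF, hFG.of_prov (Prov.prod_mono_right hp)⟩
  obtain ⟨b, hYb, hb⟩ :=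
    exists_canState_of_isIdeal hΦ hΔb hY fun ⟨F, hF, hFY⟩ => ha F hF hFY
  refine ⟨a, b, fun X' Y' _ hY' hX' hldiv => ?_, hXa, hYb⟩
  by_contra hn
  exact hb _ hldiv ⟨X', hX', (c.coentails_of_not_entails hY' hn).of_prov (Prov.prod_ldiv _ _)⟩

end Witness

section Semantics

variable {S : Type*} {M : DosenModel S} {A B : Fm}

theorem sat_ildiv_unfold {s : S} (h : sat M (A.ildiv B) s) :
    sat M (A.ldiv B) s ∧ sat M (A.ldiv (A.ildiv B)) s := by
  refine ⟨fun t u hR hA => h [t] u (List.cons_ne_nil _ _) hR (by simpa using hA), ?_⟩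
  intro t u hR hA xs w hne hRw hAxs
  obtain ⟨y, ys, rfl⟩ := List.exists_cons_of_ne_nil hne
  exact h (t :: y :: ys) w (List.cons_ne_nil _ _) ⟨u, hR, hRw⟩ (by simpa [hA] using hAxs)

theorem sat_irdiv_unfold {s : S} (h : sat M (B.irdiv A) s) :
    sat M (B.rdiv A) s ∧ sat M ((B.irdiv A).rdiv A) s := by
  refine ⟨fun t u hR hA => h [t] u (List.cons_ne_nil _ _) hR (by simpa using hA), ?_⟩
  intro t u hR hA xs w hne hRw hAxs
  obtain ⟨y, ys, rfl⟩ := List.exists_cons_of_ne_nil hne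
  exact h (t :: y :: ys) w (List.cons_ne_nil _ _) ⟨u, hR, hRw⟩ (by simpa [hA] using hAxs)

theorem sat_ildiv_of_invariant (P : S → Prop) (hB : ∀ s, P s → sat M (A.ldiv B) s)
    (hstep : ∀ s t u, P s → M.R t s u → sat M A t → P u) {s : S} (hs : P s) :
    sat M (A.ildiv B) s := by
  intro xs t hne hR hA
  induction xs generalizing s with
  | nil => exact absurd rfl hne
  | cons x xs ih =>
    cases xs with
    | nil => exact hB s hs x t hR (hA x List.mem_cons_self)
    | cons y ys =>
      obtain ⟨z, hxz, hzt⟩ := hR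
      exact ih (hstep s x z hs hxz (hA x List.mem_cons_self)) (List.cons_ne_nil _ _) hzt
        fun w hw => hA w (List.mem_cons_of_mem _ hw)

theorem sat_irdiv_of_invariant (P : S → Prop) (hB : ∀ s, P s → sat M (B.rdiv A) s)
    (hstep : ∀ s t u, P s → M.R s t u → sat M A t → P u) {s : S} (hs : P s) :
    sat M (B.irdiv A) s := by
  intro xs t hne hR hA
  induction xs generalizing s with
  | nil => exact absurd rfl hne
  | cons x xs ih =>
    cases xs with
    | nil => exact hB s hs x t hR (hA x List.mem_cons_self)
    | cons y ys =>
      obtain ⟨z, hxz, hzt⟩ := hR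
      exact ih (hstep s x z hs hxz (hA x List.mem_cons_self)) (List.cons_ne_nil _ _) hzt
        fun w hw => hA w (List.mem_cons_of_mem _ hw)

end Semantics

theorem exists_strongest_consequence {Γ : Set Fm} (hΓ : Γ.Finite) :
    ∃ χ, entails Γ χ ∧ ∀ F, entails Γ F → Prov χ F := by
  refine ⟨bigAnd hΓ.toFinset.toList, ⟨_, by simp, Prov.id _⟩, fun F ⟨γ, hγ, hp⟩ => ?_⟩
  exact (Prov.bigAnd_of_subset fun X hX => by simpa using hγ X hX).cut hp

theorem exists_strongest_common_consequence {ι : Type*} {W : Set ι} (hW : W.Finite)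
    (Γ : ι → Set Fm) (hΓ : ∀ i ∈ W, (Γ i).Finite) :
    ∃ D, (∀ i ∈ W, entails (Γ i) D) ∧
      ∀ F, (∀ i ∈ W, entails (Γ i) F) → Prov D F := by
  induction W, hW using Set.Finite.induction_on with
  | empty => exact ⟨.bot, by simp, fun F _ => Prov.bot F⟩
  | @insert i W _ _ ih =>
    obtain ⟨D, hWD, hD⟩ := ih fun j hj => hΓ j (Set.mem_insert_of_mem _ hj)
    obtain ⟨χ, hχ, hχF⟩ := exists_strongest_consequence (hΓ i (Set.mem_insert _ _))
    refine ⟨χ.or D, ?_, fun F hF => Prov.orE (hχF F (hF i (Set.mem_insert _ _)))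
      (hD F fun j hj => hF j (Set.mem_insert_of_mem _ hj))⟩
    rintro j (rfl | hj)
    · exact hχ.cut (Prov.orI1 _ _)
    · exact (hWD j hj).cut (Prov.orI2 _ _)

section Truth

variable {Φ : Set Fm} {X Y : Fm}

theorem sat_canModel_prod_iff (hΦ : Φ.Finite) (hXY : X.prod Y ∈ Φ) (hX : X ∈ Φ)
    (hY : Y ∈ Φ) (ihX : ∀ a, sat (canModel Φ) X a ↔ X ∈ a.1.1)
    (ihY : ∀ a, sat (canModel Φ) Y a ↔ Y ∈ a.1.1)
    (a : CanState Φ) : sat (canModel Φ) (X.prod Y) a ↔ X.prod Y ∈ a.1.1 := by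
  constructor
  · rintro ⟨t, u, hR, hXt, hYu⟩
    exact hR.mem hX hXY (entails_of_mem ((ihX t).1 hXt))
      ((entails_of_mem ((ihY u).1 hYu)).cut (Prov.resL1 (Prov.id _)))
  · intro h
    obtain ⟨t, u, hR, hXt, hYu⟩ := exists_prod_witness hΦ a hX hY h
    exact ⟨t, u, hR, (ihX t).2 hXt, (ihY u).2 hYu⟩

theorem sat_canModel_ldiv_iff (hΦ : Φ.Finite) (hXY : X.ldiv Y ∈ Φ) (hX : X ∈ Φ)
    (hY : Y ∈ Φ) (ihX : ∀ a, sat (canModel Φ) X a ↔ X ∈ a.1.1)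
    (ihY : ∀ a, sat (canModel Φ) Y a ↔ Y ∈ a.1.1)
    (a : CanState Φ) : sat (canModel Φ) (X.ldiv Y) a ↔ X.ldiv Y ∈ a.1.1 := by
  constructor
  · intro h
    by_contra hn
    obtain ⟨t, u, hR, hXt, hu⟩ :=
      exists_ldiv_witness hΦ a hX (mt (a.mem_iff_entails hXY).2 hn)
    exact hu (entails_of_mem ((ihY u).1 (h t u hR ((ihX t).2 hXt))))
  · intro h t u hR hXt
    exact (ihY u).2 (hR.mem hX hY (entails_of_mem ((ihX t).1 hXt)) (entails_of_mem h))

theorem sat_canModel_rdiv_iff (hΦ : Φ.Finite) (hYX : Y.rdiv X ∈ Φ) (hX : X ∈ Φ)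
    (hY : Y ∈ Φ) (ihX : ∀ a, sat (canModel Φ) X a ↔ X ∈ a.1.1)
    (ihY : ∀ a, sat (canModel Φ) Y a ↔ Y ∈ a.1.1)
    (a : CanState Φ) : sat (canModel Φ) (Y.rdiv X) a ↔ Y.rdiv X ∈ a.1.1 := by
  constructor
  · intro h
    by_contra hn
    obtain ⟨t, u, hR, hXt, hu⟩ :=
      exists_rdiv_witness hΦ a hX (mt (a.mem_iff_entails hYX).2 hn)
    exact hu (entails_of_mem ((ihY u).1 (h t u hR ((ihX t).2 hXt))))
  · intro h t u hR hXt
    exact (ihY u).2 (hR.mem hYX hY (entails_of_mem h)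
      ((entails_of_mem ((ihX t).1 hXt)).cut (Prov.resL1 (Prov.rdiv_prod _ _))))

/-- The disjunction `D` of the characteristic formulas of the (finitely many) states satisfying
`X∖∖Y` proves `X∖Y` and `X∖D`, hence `X∖∖Y` by `Prov.ildiv_coind`. -/
theorem sat_canModel_ildiv_iff (hΦ : Φ.Finite) (hXY : X.ildiv Y ∈ Φ) (hldiv : X.ldiv Y ∈ Φ)
    (hX : X ∈ Φ) (ihX : ∀ a, sat (canModel Φ) X a ↔ X ∈ a.1.1)
    (ihXY : ∀ a, sat (canModel Φ) (X.ldiv Y) a ↔ X.ldiv Y ∈ a.1.1) (a : CanState Φ) :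
    sat (canModel Φ) (X.ildiv Y) a ↔ X.ildiv Y ∈ a.1.1 := by
  constructor
  · intro hsat
    have := CanState.finite hΦ
    obtain ⟨D, hWD, hD⟩ := exists_strongest_common_consequence
      (Set.toFinite {u | sat (canModel Φ) (X.ildiv Y) u}) (fun u => u.1.1)
      fun u _ => hΦ.subset u.fst_subset
    have hDY : Prov D (X.ldiv Y) :=
      hD _ fun u hu => entails_of_mem ((ihXY u).1 (sat_ildiv_unfold hu).1)
    have hDD : Prov D (X.ldiv D) := hD _ fun u hu => by
      by_contra hn
      obtain ⟨t, z, hR, hXt, hz⟩ := exists_ldiv_witness hΦ u hX hn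
      exact hz (hWD z ((sat_ildiv_unfold hu).2 t z hR ((ihX t).2 hXt)))
    exact (a.mem_iff_entails hXY).2 ((hWD a hsat).cut (Prov.ildiv_coind hDY hDD))
  · refine sat_ildiv_of_invariant (fun u => X.ildiv Y ∈ u.1.1) (fun u hu => (ihXY u).2 ?_)
      fun u t z hu hR hXt => ?_
    · exact (u.mem_iff_entails hldiv).2
        ((entails_of_mem hu).cut ((Prov.ildivUnfold X Y).cut (Prov.andE1 _ _)))
    · exact hR.mem hX hXY (entails_of_mem ((ihX t).1 hXt))
        ((entails_of_mem hu).cut ((Prov.ildivUnfold X Y).cut (Prov.andE2 _ _)))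

theorem sat_canModel_irdiv_iff (hΦ : Φ.Finite) (hYX : Y.irdiv X ∈ Φ) (hrdiv : Y.rdiv X ∈ Φ)
    (hX : X ∈ Φ) (ihX : ∀ a, sat (canModel Φ) X a ↔ X ∈ a.1.1)
    (ihYX : ∀ a, sat (canModel Φ) (Y.rdiv X) a ↔ Y.rdiv X ∈ a.1.1) (a : CanState Φ) :
    sat (canModel Φ) (Y.irdiv X) a ↔ Y.irdiv X ∈ a.1.1 := by
  constructor
  · intro hsat
    have := CanState.finite hΦ
    obtain ⟨D, hWD, hD⟩ := exists_strongest_common_consequence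
      (Set.toFinite {u | sat (canModel Φ) (Y.irdiv X) u}) (fun u => u.1.1)
      fun u _ => hΦ.subset u.fst_subset
    have hDY : Prov D (Y.rdiv X) :=
      hD _ fun u hu => entails_of_mem ((ihYX u).1 (sat_irdiv_unfold hu).1)
    have hDD : Prov D (D.rdiv X) := hD _ fun u hu => by
      by_contra hn
      obtain ⟨t, z, hR, hXt, hz⟩ := exists_rdiv_witness hΦ u hX hn
      exact hz (hWD z ((sat_irdiv_unfold hu).2 t z hR ((ihX t).2 hXt)))
    exact (a.mem_iff_entails hYX).2 ((hWD a hsat).cut (Prov.irdiv_coind hDY hDD))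
  · refine sat_irdiv_of_invariant (fun u => Y.irdiv X ∈ u.1.1) (fun u hu => (ihYX u).2 ?_)
      fun u t z hu hR hXt => ?_
    · exact (u.mem_iff_entails hrdiv).2
        ((entails_of_mem hu).cut ((Prov.irdivUnfold X Y).cut (Prov.andE1 _ _)))
    · exact hR.mem hYX hYX (entails_of_mem hu) ((entails_of_mem ((ihX t).1 hXt)).cut
        (Prov.resL1 (Prov.resR2 ((Prov.irdivUnfold X Y).cut (Prov.andE2 _ _)))))

end Truth

def subFm : Fm → Set Fm
  | .var n => {.var n}
  | .top => {.top}
  | .bot => {.bot}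
  | .and A B => insert (.and A B) (subFm A ∪ subFm B)
  | .or A B => insert (.or A B) (subFm A ∪ subFm B)
  | .prod A B => insert (.prod A B) (subFm A ∪ subFm B)
  | .ldiv A B => insert (.ldiv A B) (subFm A ∪ subFm B)
  | .rdiv B A => insert (.rdiv B A) (subFm B ∪ subFm A)
  | .ildiv A B => insert (.ildiv A B) (insert (.ldiv A B) (subFm A ∪ subFm B))
  | .irdiv B A => insert (.irdiv B A) (insert (.rdiv B A) (subFm B ∪ subFm A))

theorem subFm_finite (A : Fm) : (subFm A).Finite := by
  induction A <;> simp_all [subFm]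

theorem mem_subFm_self (A : Fm) : A ∈ subFm A := by
  cases A <;> simp [subFm]

theorem subFm_subset_of_mem {A C : Fm} (h : C ∈ subFm A) : subFm C ⊆ subFm A := by
  induction A with
  | var | top | bot => simp only [subFm, Set.mem_singleton_iff] at h; rw [h]
  | and X Y ihX ihY | or X Y ihX ihY | prod X Y ihX ihY | ldiv X Y ihX ihY | rdiv X Y ihX ihY =>
    simp only [subFm, Set.mem_insert_iff, Set.mem_union] at h ⊢
    rcases h with rfl | h | h
    · rfl
    · exact ((ihX h).trans Set.subset_union_left).trans (Set.subset_insert _ _)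
    · exact ((ihY h).trans Set.subset_union_right).trans (Set.subset_insert _ _)
  | ildiv X Y ihX ihY | irdiv X Y ihX ihY =>
    simp only [subFm, Set.mem_insert_iff, Set.mem_union] at h ⊢
    rcases h with rfl | rfl | h | h
    · rfl
    · exact Set.subset_insert _ _
    · exact ((ihX h).trans Set.subset_union_left).trans
        ((Set.subset_insert _ _).trans (Set.subset_insert _ _))
    · exact ((ihY h).trans Set.subset_union_right).trans
        ((Set.subset_insert _ _).trans (Set.subset_insert _ _))

theorem closure_subset_biUnion_subFm {Φ : Set Fm} {C : Fm} (h : Closure Φ C) :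
    C ∈ ⋃ D ∈ insert Fm.top (insert Fm.bot Φ), subFm D := by
  have mem_of_mem_subFm : ∀ {X}, X ∈ ⋃ D ∈ insert Fm.top (insert Fm.bot Φ), subFm D →
      ∀ {Y}, Y ∈ subFm X → Y ∈ ⋃ D ∈ insert Fm.top (insert Fm.bot Φ), subFm D := by
    intro X hX Y hY
    obtain ⟨D, hD, hXD⟩ := Set.mem_iUnion₂.1 hX
    exact Set.mem_iUnion₂.2 ⟨D, hD, subFm_subset_of_mem hXD hY⟩
  induction h with
  | base h => exact Set.mem_iUnion₂.2 ⟨_, .inr (.inr h), mem_subFm_self _⟩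
  | top => exact Set.mem_iUnion₂.2 ⟨_, .inl rfl, mem_subFm_self _⟩
  | bot => exact Set.mem_iUnion₂.2 ⟨_, .inr (.inl rfl), mem_subFm_self _⟩
  | _ _ ih => exact mem_of_mem_subFm ih (by simp [subFm, mem_subFm_self])

theorem Closure.finite {Φ : Set Fm} (hΦ : Φ.Finite) : {C | Closure Φ C}.Finite :=
  (((hΦ.insert _).insert _).biUnion fun D _ => subFm_finite D).subset
    fun _ => closure_subset_biUnion_subFm

theorem sat_canModel_iff {Φ' : Set Fm} (hΦ : {C | Closure Φ' C}.Finite) {C : Fm}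
    (hC : Closure Φ' C) (a : CanState {C | Closure Φ' C}) :
    sat (canModel {C | Closure Φ' C}) C a ↔ C ∈ a.1.1 := by
  induction C generalizing a with
  | var p => exact ⟨And.right, fun h => ⟨hC, h⟩⟩
  | top => exact ⟨fun _ => (a.mem_iff_entails hC).2 (entails_of_prov_top (Prov.id _)),
      fun _ => trivial⟩
  | bot => exact ⟨False.elim, fun h => indepPair_iff.1 a.2.1 _ (entails_of_mem h) coentails_bot⟩
  | and X Y ihX ihY =>
    have ihX := ihX hC.andL
    have ihY := ihY hC.andR
    refine ⟨fun ⟨hX, hY⟩ => (a.mem_iff_entails hC).2 ?_,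
      fun h => ⟨(ihX a).2 ?_, (ihY a).2 ?_⟩⟩
    · exact (entails_of_mem ((ihX a).1 hX)).and (entails_of_mem ((ihY a).1 hY))
    · exact (a.mem_iff_entails hC.andL).2 ((entails_of_mem h).cut (Prov.andE1 _ _))
    · exact (a.mem_iff_entails hC.andR).2 ((entails_of_mem h).cut (Prov.andE2 _ _))
  | or X Y ihX ihY =>
    have ihX := ihX hC.orL
    have ihY := ihY hC.orR
    refine ⟨fun h => (a.mem_iff_entails hC).2 ?_, fun h => ?_⟩
    · rcases h with h | h
      · exact (entails_of_mem ((ihX a).1 h)).cut (Prov.orI1 _ _)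
      · exact (entails_of_mem ((ihY a).1 h)).cut (Prov.orI2 _ _)
    · exact (a.mem_or_of_or_mem hC.orL hC.orR h).imp (ihX a).2 (ihY a).2
  | prod X Y ihX ihY =>
    exact sat_canModel_prod_iff hΦ hC hC.prodL hC.prodR (ihX hC.prodL) (ihY hC.prodR) a
  | ldiv X Y ihX ihY =>
    exact sat_canModel_ldiv_iff hΦ hC hC.ldivL hC.ldivR (ihX hC.ldivL) (ihY hC.ldivR) a
  | rdiv Y X ihY ihX =>
    exact sat_canModel_rdiv_iff hΦ hC hC.rdivR hC.rdivL (ihX hC.rdivR) (ihY hC.rdivL) a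
  | ildiv X Y ihX ihY =>
    exact sat_canModel_ildiv_iff hΦ hC hC.ildivDiv hC.ildivL (ihX hC.ildivL)
      (sat_canModel_ldiv_iff hΦ hC.ildivDiv hC.ildivL hC.ildivR (ihX hC.ildivL) (ihY hC.ildivR)) a
  | irdiv Y X ihY ihX =>
    exact sat_canModel_irdiv_iff hΦ hC hC.irdivDiv hC.irdivR (ihX hC.irdivR)
      (sat_canModel_rdiv_iff hΦ hC.irdivDiv hC.irdivR hC.irdivL (ihX hC.irdivR) (ihY hC.irdivL)) a

/-- Bounded finite model property: if A ⊢ B is unprovable in IDFNL, it fails in a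
Došen model with at most 2^|Φ| states, where Φ is the closure of {A, B}. -/
theorem bounded_fmp (A B : Fm) (h : ¬ Prov A B) :
    ∃ (S : Type) (M : DosenModel S), Nonempty S ∧ Finite S ∧
      Nat.card S ≤ 2 ^ Nat.card {C | Closure ({A, B} : Set Fm) C} ∧
      ¬ valid M A B := by
  have hΦ := Closure.finite (Set.toFinite {A, B})
  have hA : Closure {A, B} A := .base (.inl rfl)
  have hB : Closure {A, B} B := .base (.inr rfl)
  have hAB : IndepPair {A} {B} := indepPair_singleton_left_iff.2 (mt coentails_singleton_iff.1 h)
  obtain ⟨a, hAa, ha⟩ := exists_canState hΦ hAB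
  refine ⟨_, canModel _, ⟨a⟩, CanState.finite hΦ, CanState.card_le hΦ, fun hvalid => ?_⟩
  have hBa := (sat_canModel_iff hΦ hB a).1 (hvalid a ((sat_canModel_iff hΦ hA a).2 (hAa ⟨rfl, hA⟩)))
  exact indepPair_singleton_right_iff.1 ha (entails_of_mem hBa)
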